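/- arXiv:2604.02373 — 2 statements merged into one kernel-verified Lean document; each statement's English description precedes it below -/
import Mathlib

section
/- For an affine automorphism f(x) = u·x + v of Z/n and a composition σ ∈ Σ(n,k), the image of the realization f(σ(x)) equals the realization of the u-transform u·σ at the point f(x); consequently f maps the family of translates {σ(x) + i : i ∈ Z/n} to the family {(u·σ)(y) + i : i ∈ Z/n}. -/
/-!
Consecutive differences of a sorted list `0 = t₀ ≤ t₁ ≤ … ≤ t_r`, closed off by `n`, have the
partial sums `t₀, …, t_r` again. The u-transform is built this way from the sorted residues
`(u S_b).val`, so its partial sums are exactly these residues, and `f(σ(x)) = f x + u {S_b}` is the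
realization of `u·σ` at `f x`. Finally `f` sends the translate by `i` to the translate by `u i`,
and `i ↦ u i` is onto since `u` is a unit.
-/

def partialSumsList (σ : List ℕ) : List ℕ := (σ.scanl (· + ·) 0).take σ.length

def uTransform (n : ℕ) (u : ZMod n) (σ : List ℕ) : List ℕ :=
  let L := ((partialSumsList σ).map fun s => (u * (s : ZMod n)).val).toFinset.sort (· ≤ ·)
  List.zipWith (fun a b => a - b) (L.tail ++ [n]) L

/-- Realization of a composition (as a list) at a point of `ZMod n`. -/
def realizationL (n : ℕ) (σ : List ℕ) (x : ZMod n) : Set (ZMod n) :=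
  (fun s : ℕ => x + (s : ZMod n)) '' {s | s ∈ partialSumsList σ}

theorem List.scanl_add_zipWith_sub {a b : ℕ} {l : List ℕ}
    (hl : (a :: (l ++ [b])).Pairwise (· ≤ ·)) :
    ((l ++ [b]).zipWith (· - ·) (a :: l)).scanl (· + ·) a = a :: (l ++ [b]) := by
  induction l generalizing a with
  | nil => simp [Nat.add_sub_cancel' (List.rel_of_pairwise_cons hl (List.mem_singleton_self b))]
  | cons c l ih =>
    obtain ⟨hac, hcl⟩ := List.pairwise_cons.mp hl
    simp only [List.cons_append, List.zipWith_cons_cons, List.scanl_cons,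
      Nat.add_sub_cancel' (hac c (by simp))]
    exact congrArg (a :: ·) (ih hcl)

theorem partialSumsList_zipWith_sub {l : List ℕ} {m : ℕ} (hl : l.Pairwise (· ≤ ·))
    (hm : ∀ t ∈ l, t ≤ m) (h0 : l ≠ [] → 0 ∈ l) :
    partialSumsList ((l.tail ++ [m]).zipWith (· - ·) l) = l := by
  rcases l with _ | ⟨a, l⟩
  · rfl
  have ha : a = 0 := by
    rcases List.mem_cons.mp (h0 (List.cons_ne_nil a l)) with h | h
    · exact h.symm
    · exact Nat.le_zero.mp (List.rel_of_pairwise_cons hl h)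
  subst ha
  have hsorted : (0 :: (l ++ [m])).Pairwise (· ≤ ·) := by
    rw [← List.cons_append, List.pairwise_append]
    exact ⟨hl, List.pairwise_singleton _ _, fun x hx y hy => (List.mem_singleton.mp hy) ▸ hm x hx⟩
  rw [partialSumsList, List.tail_cons, List.scanl_add_zipWith_sub hsorted]
  simp [List.take_succ_cons]

theorem zero_mem_partialSumsList {σ : List ℕ} (hσ : σ ≠ []) : 0 ∈ partialSumsList σ := by
  obtain ⟨c, σ, rfl⟩ := List.exists_cons_of_ne_nil hσ
  simp [partialSumsList]

theorem mem_partialSumsList_uTransform {n : ℕ} [NeZero n] (u : ZMod n) (σ : List ℕ) (t : ℕ) :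
    t ∈ partialSumsList (uTransform n u σ) ↔ ∃ s ∈ partialSumsList σ, (u * s).val = t := by
  rw [uTransform, partialSumsList_zipWith_sub (Finset.pairwise_sort _ _)]
  · simp
  · simp only [Finset.mem_sort, List.mem_toFinset, List.mem_map]
    rintro _ ⟨s, -, rfl⟩
    exact (ZMod.val_lt _).le
  · intro hne
    obtain rfl | hσ := eq_or_ne σ []
    · simp [partialSumsList] at hne
    · simpa using ⟨0, zero_mem_partialSumsList hσ, by simp⟩

theorem image_affine_realizationL {n : ℕ} [NeZero n] (u v : ZMod n) (σ : List ℕ) (x : ZMod n) :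
    (fun y => u * y + v) '' realizationL n σ x = realizationL n (uTransform n u σ) (u * x + v) := by
  ext y
  simp only [realizationL, Set.image_image, Set.mem_image, Set.mem_ofPred_eq,
    mem_partialSumsList_uTransform]
  constructor
  · rintro ⟨s, hs, rfl⟩
    exact ⟨_, ⟨s, hs, rfl⟩, by simp only [ZMod.natCast_val, ZMod.cast_id]; ring⟩
  · rintro ⟨_, ⟨s, hs, rfl⟩, rfl⟩
    exact ⟨s, hs, by simp only [ZMod.natCast_val, ZMod.cast_id]; ring⟩

theorem image_affine_range_image_add {R : Type*} [Semiring R] (u : Rˣ) (v : R) (A : Set R) :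
    Set.image (fun y => (u : R) * y + v) '' Set.range (fun i => (· + i) '' A) =
      Set.range fun i => (· + i) '' ((fun y => (u : R) * y + v) '' A) := by
  have htranslate : ∀ i, (fun y => (u : R) * y + v) '' ((· + i) '' A) =
      (· + u * i) '' ((fun y => (u : R) * y + v) '' A) := by
    intro i
    simp only [Set.image_image]
    refine Set.image_congr fun a _ => ?_
    rw [mul_add, add_right_comm]
  rw [← Set.range_comp', funext htranslate]
  exact (Units.mulLeft_bijective u).surjective.range_comp (fun i => (· + i) '' _)

theorem affine_image_of_orbit_cover_general (n : ℕ) [NeZero n] (u : (ZMod n)ˣ) (v : ZMod n)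
    (σ : List ℕ) :
    (∀ x : ZMod n,
      (fun y => (u : ZMod n) * y + v) '' realizationL n σ x =
        realizationL n (uTransform n (u : ZMod n) σ) ((u : ZMod n) * x + v)) ∧
    (∀ x : ZMod n,
      (fun A : Set (ZMod n) => (fun y => (u : ZMod n) * y + v) '' A) ''
          (Set.range fun i : ZMod n => (fun a => a + i) '' realizationL n σ x) =
        Set.range fun i : ZMod n =>
          (fun a => a + i) ''
            realizationL n (uTransform n (u : ZMod n) σ) ((u : ZMod n) * x + v)) := by
  refine ⟨image_affine_realizationL _ _ σ, fun x => ?_⟩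
  rw [← image_affine_realizationL]
  exact image_affine_range_image_add u v _

theorem affine_image_of_orbit_cover (n k : ℕ) [NeZero n] (u : (ZMod n)ˣ) (v : ZMod n)
    (σ : List ℕ) (hlen : σ.length = k) (hpos : ∀ x ∈ σ, 0 < x) (hsum : σ.sum = n) :
    (∀ x : ZMod n,
      (fun y => (u : ZMod n) * y + v) '' realizationL n σ x =
        realizationL n (uTransform n (u : ZMod n) σ) ((u : ZMod n) * x + v)) ∧
    (∀ x : ZMod n,
      (fun A : Set (ZMod n) => (fun y => (u : ZMod n) * y + v) '' A) ''
          (Set.range fun i : ZMod n => (fun a => a + i) '' realizationL n σ x) =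
        Set.range fun i : ZMod n =>
          (fun a => a + i) ''
            realizationL n (uTransform n (u : ZMod n) σ) ((u : ZMod n) * x + v)) :=
  affine_image_of_orbit_cover_general n u v σ
end

section
/- Let gcd(n,k) = 1 with 1 ≤ k ≤ n and let σ ∈ Σ(n,k) with realizations A_i = σ(0) + i for i ∈ Z/n. Then every face of the nerve of the cover {A_i} is contained in some maximal face Δ_x = {i ∈ Z/n : x ∈ A_i} for some x ∈ Z/n, each Δ_x has exactly k elements, and the map x ↦ Δ_x is injective. -/
open scoped Classical

def partialSum {k : ℕ} (σ : Fin k → ℕ) (b : Fin k) : ℕ :=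
  ∑ j ∈ Finset.univ.filter (fun j : Fin k => j < b), σ j

/-- The translate of the realization of `σ` at `0` by `i`. -/
def chord (n : ℕ) {k : ℕ} (σ : Fin k → ℕ) (i : ZMod n) : Finset (ZMod n) :=
  Finset.univ.image fun b : Fin k => (partialSum σ b : ZMod n) + i

/-- The harmonic region of `x`: the set of indices `i` with `x ∈ A_i`. -/
def harmonicRegion (n : ℕ) [NeZero n] {k : ℕ} (σ : Fin k → ℕ) (x : ZMod n) : Finset (ZMod n) :=
  Finset.univ.filter fun i : ZMod n => x ∈ chord n σ i

lemma partialSum_strictMono {k : ℕ} (σ : Fin k → ℕ) (hpos : ∀ j, 0 < σ j) :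
    StrictMono (partialSum σ) := by
  intro a b hab
  apply Finset.sum_lt_sum_of_subset (i := a)
  · intro j hj
    simp only [Finset.mem_filter, Finset.mem_univ, true_and] at *
    exact hj.trans hab
  · simp [hab]
  · simp
  · exact hpos a
  · intros; exact Nat.zero_le _

lemma partialSum_lt {n k : ℕ} (σ : Fin k → ℕ) (hpos : ∀ j, 0 < σ j)
    (hsum : ∑ j, σ j = n) (b : Fin k) : partialSum σ b < n := by
  have h : partialSum σ b + σ b ≤ n := by
    rw [← hsum]
    have : partialSum σ b + σ b = ∑ j ∈ insert b (Finset.univ.filter (fun j : Fin k => j < b)), σ j := by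
      rw [Finset.sum_insert (by simp), add_comm]; rfl
    rw [this]
    exact Finset.sum_le_sum_of_subset (by intro j _; simp)
  have := hpos b
  omega

lemma cast_partialSum_inj {n k : ℕ} [NeZero n] (σ : Fin k → ℕ) (hpos : ∀ j, 0 < σ j)
    (hsum : ∑ j, σ j = n) :
    Function.Injective (fun b : Fin k => (partialSum σ b : ZMod n)) := by
  intro a b hab
  have ha := ZMod.val_cast_of_lt (partialSum_lt σ hpos hsum a)
  have hb := ZMod.val_cast_of_lt (partialSum_lt σ hpos hsum b)
  have : partialSum σ a = partialSum σ b := by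
    rw [← ha, ← hb]; exact congrArg ZMod.val hab
  exact (partialSum_strictMono σ hpos).injective this

lemma harmonicRegion_eq {n k : ℕ} [NeZero n] (σ : Fin k → ℕ) (x : ZMod n) :
    harmonicRegion n σ x = Finset.univ.image (fun b : Fin k => x - (partialSum σ b : ZMod n)) := by
  ext i
  simp only [harmonicRegion, chord, Finset.mem_filter, Finset.mem_univ, true_and,
    Finset.mem_image]
  constructor
  · rintro ⟨b, hb⟩
    exact ⟨b, by rw [← hb]; ring⟩
  · rintro ⟨b, hb⟩
    exact ⟨b, by rw [← hb]; ring⟩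

theorem nerve_of_primitive_orbit_cover (n k : ℕ) [NeZero n]
    (hk : 1 ≤ k) (hkn : k ≤ n) (hcop : Nat.Coprime n k)
    (σ : Fin k → ℕ) (hpos : ∀ j, 0 < σ j) (hsum : ∑ j, σ j = n) :
    (∀ J : Finset (ZMod n), J.Nonempty → (∃ x : ZMod n, ∀ j ∈ J, x ∈ chord n σ j) →
      ∃ x : ZMod n, J ⊆ harmonicRegion n σ x) ∧
    (∀ x : ZMod n, (harmonicRegion n σ x).card = k) ∧
    Function.Injective (harmonicRegion n σ) := by
  have hinj := cast_partialSum_inj σ hpos hsum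
  refine ⟨?_, ?_, ?_⟩
  · rintro J _ ⟨x, hx⟩
    exact ⟨x, fun j hj => by simp [harmonicRegion, hx j hj]⟩
  · intro x
    rw [harmonicRegion_eq]
    rw [Finset.card_image_of_injective _ (fun a b hab => hinj (by
      rwa [sub_right_inj] at hab))]
    simp
  · intro x y hxy
    have key : ∀ z : ZMod n, ∑ i ∈ harmonicRegion n σ z, i
        = (k : ZMod n) * z - ∑ b : Fin k, (partialSum σ b : ZMod n) := by
      intro z
      have h2 : ∀ a ∈ (Finset.univ : Finset (Fin k)), ∀ b ∈ Finset.univ,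
          z - (partialSum σ a : ZMod n) = z - (partialSum σ b : ZMod n) → a = b :=
        fun a _ b _ hab => hinj (by rwa [sub_right_inj] at hab)
      rw [harmonicRegion_eq, Finset.sum_image h2, Finset.sum_sub_distrib]
      simp [mul_comm]
    have h : (k : ZMod n) * x = (k : ZMod n) * y := by
      have h1 := key x
      rw [hxy, key y] at h1
      linear_combination -h1
    have hu : IsUnit (k : ZMod n) := (ZMod.isUnit_iff_coprime k n).mpr hcop.symm
    exact hu.mul_left_cancel h
end
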